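/- Under the setting of the generic game bound — f : ℝ^d → ℝ convex lower semicontinuous and L-smooth with respect to ‖·‖, 𝒳 compact convex, x* a minimizer of f over 𝒳, y_t = ∇f(x̃_t) (Optimistic-FTL) and x_t produced by Mirror Descent x_t = argmin_{x ∈ 𝒳}[γ_t⟨x, α_t y_t⟩ + V_{x_{t−1}}(x)] with V the Bregman divergence of a differentiable 1-strongly convex φ, and V_{x_t}(x*) ≤ D for all t — choose the weights α_t = t and any non-increasing learning rates γ_t with 1/(C L) ≤ γ_t ≤ 1/(4L) for some constant C > 4. Then f(x̄_T) − min_{x ∈ 𝒳} f(x) ≤ 2 C L D / T², where x̄_T = (1/A_T) Σ_{t=1}^T α_t x_t and A_T = T(T+1)/2. -/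

import Mathlib

open scoped RealInnerProductSpace
open Finset

/-- The dual norm of a norm `N` on ℝ^d: `‖y‖_* = sup {⟪x, y⟫ : N x ≤ 1}`. -/
noncomputable def dualNorm {d : ℕ} (N : EuclideanSpace ℝ (Fin d) → ℝ)
    (y : EuclideanSpace ℝ (Fin d)) : ℝ :=
  sSup ((fun x => ⟪x, y⟫) '' {x | N x ≤ 1})

/-!
Write `A_t = t(t+1)/2` and `x̄_t` for the `α`-weighted average of `x_1, …, x_t`. In round `t`
the new average differs from the optimistic point `x̃_t` by `(α_t/A_t)(x_t - x_{t-1})`, so the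
descent inequality of `L`-smoothness at `x̃_t`, the gradient inequality of convexity at `x̃_t`
(tested against `x̄_{t-1}` and `x*`) and the three-point inequality of the mirror-descent step give
`A_t (f x̄_t - f x*) ≤ A_{t-1} (f x̄_{t-1} - f x*) + γ_t⁻¹ (V_{x_{t-1}} x* - V_{x_t} x*)`.
The smoothness error `L α_t² / (2 A_t) ‖x_t - x_{t-1}‖²` is absorbed by the term
`γ_t⁻¹ V_{x_{t-1}} x_t` of the three-point inequality, because `α_t² ≤ 2 A_t`, `γ_t ≤ 1/(4L)` and
`φ` is 1-strongly convex. Telescoping with non-increasing `γ_t` bounds `A_T (f x̄_T - f x*)` by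
`γ_T⁻¹ D ≤ C L D`, and `A_T ≥ T²/2`.
-/

open AffineMap

section InnerProductSpace

variable {E : Type*} [NormedAddCommGroup E] [InnerProductSpace ℝ E] [CompleteSpace E]

theorem hasDerivAt_comp_lineMap {f : E → ℝ} {u v : E} {s : ℝ}
    (hf : DifferentiableAt ℝ f (lineMap u v s)) :
    HasDerivAt (f ∘ lineMap u v) ⟪gradient f (lineMap u v s), v - u⟫ s := by
  simpa using hf.hasGradientAt.hasFDerivAt.comp_hasDerivAt s hasDerivAt_lineMap

theorem ConvexOn.add_inner_gradient_le {f : E → ℝ} (hf : ConvexOn ℝ Set.univ f) {u : E}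
    (hfu : DifferentiableAt ℝ f u) (v : E) : f u + ⟪gradient f u, v - u⟫ ≤ f v := by
  have hder : HasDerivAt (f ∘ lineMap u v) ⟪gradient f u, v - u⟫ (0 : ℝ) := by
    have := hasDerivAt_comp_lineMap (v := v) (s := (0 : ℝ)) (by rwa [lineMap_apply_zero])
    rwa [lineMap_apply_zero] at this
  have := (hf.comp_affineMap (lineMap u v)).le_slope_of_hasDerivAt (Set.mem_univ 0)
    (Set.mem_univ 1) zero_lt_one hder
  rw [slope_def_field, Function.comp_apply, Function.comp_apply, lineMap_apply_zero,
    lineMap_apply_one, sub_zero, div_one] at this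
  linarith

theorem IsMinOn.inner_gradient_add_nonneg {φ : E → ℝ} {X : Set E} {a b : E} (g : E)
    (hX : Convex ℝ X) (ha : a ∈ X) (hb : b ∈ X) (hφ : DifferentiableAt ℝ φ a)
    (hmin : IsMinOn (fun w => φ w + ⟪g, w⟫) X a) : 0 ≤ ⟪gradient φ a + g, b - a⟫ := by
  have hder := hφ.hasFDerivAt.add (innerSL ℝ g).hasFDerivAt
  have := hmin.localize.hasFDerivWithinAt_nonneg hder.hasFDerivWithinAt
    (sub_mem_posTangentConeAt_of_segment_subset (hX.segment_subset ha hb))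
  rwa [add_apply, ← inner_gradient_left, innerSL_apply_apply, ← inner_add_left] at this

noncomputable def bregmanDiv (φ : E → ℝ) (c x : E) : ℝ :=
  φ x - ⟪gradient φ c, x - c⟫ - φ c

theorem inner_gradient_sub_eq_bregmanDiv (φ : E → ℝ) (c a b : E) :
    ⟪gradient φ a - gradient φ c, b - a⟫
      = bregmanDiv φ c b - bregmanDiv φ a b - bregmanDiv φ c a := by
  simp only [bregmanDiv]
  rw [show b - c = (b - a) + (a - c) by abel, inner_add_right, inner_sub_left]
  ring

theorem IsMinOn.inner_le_bregmanDiv {φ : E → ℝ} {X : Set E} {a b c y : E} {η : ℝ}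
    (hmin : IsMinOn (fun w => η * ⟪w, y⟫ + bregmanDiv φ c w) X a)
    (hX : Convex ℝ X) (ha : a ∈ X) (hb : b ∈ X) (hφ : DifferentiableAt ℝ φ a) :
    η * ⟪y, a - b⟫ ≤ bregmanDiv φ c b - bregmanDiv φ a b - bregmanDiv φ c a := by
  have hmin' : IsMinOn (fun w => φ w + ⟪η • y - gradient φ c, w⟫) X a := fun w hw => by
    have := hmin hw
    simp only [Set.mem_ofPred_eq, bregmanDiv, inner_sub_left, inner_sub_right,
      real_inner_smul_left, real_inner_comm y] at this ⊢
    linarith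
  have := hmin'.inner_gradient_add_nonneg _ hX ha hb hφ
  rw [← inner_gradient_sub_eq_bregmanDiv]
  rw [show gradient φ a + (η • y - gradient φ c) = (gradient φ a - gradient φ c) + η • y by abel,
    inner_add_left, real_inner_smul_left] at this
  rw [← neg_sub b a, inner_neg_right]
  linarith

end InnerProductSpace

theorem Seminorm.exists_pos_mul_norm_le {E : Type*} [NormedAddCommGroup E] [NormedSpace ℝ E]
    [FiniteDimensional ℝ E] (p : Seminorm ℝ E) (hp : ∀ u, p u = 0 → u = 0) :
    ∃ m > 0, ∀ u, m * ‖u‖ ≤ p u := by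
  have hcont : Continuous p := by
    simpa [continuousOn_univ] using p.convexOn.continuousOn_interior
  rcases subsingleton_or_nontrivial E with hE | hE
  · exact ⟨1, one_pos, fun u => by simp [Subsingleton.elim u 0]⟩
  obtain ⟨z, hz, hzmin⟩ := (isCompact_sphere (0 : E) 1).exists_isMinOn
    (NormedSpace.sphere_nonempty.2 zero_le_one) hcont.continuousOn
  have hz1 : ‖z‖ = 1 := by simpa using hz
  have hpz : 0 < p z := (apply_nonneg p z).lt_of_ne' fun h => by simp [hp z h] at hz1
  refine ⟨p z, hpz, fun u => ?_⟩
  rcases eq_or_ne u 0 with rfl | hu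
  · simp
  have := hzmin (a := ‖u‖⁻¹ • u) (by simp [norm_smul, hu])
  rw [Set.mem_ofPred_eq, map_smul_eq_mul, norm_inv, norm_norm] at this
  calc p z * ‖u‖ ≤ ‖u‖⁻¹ * p u * ‖u‖ := by gcongr
    _ = p u := by field_simp

section DualNorm

variable {d : ℕ} {p : Seminorm ℝ (EuclideanSpace ℝ (Fin d))}

theorem inner_le_mul_dualNorm (hp : ∀ u, p u = 0 → u = 0) (z w : EuclideanSpace ℝ (Fin d)) :
    ⟪z, w⟫ ≤ p w * dualNorm p z := by
  -- the lower bound keeps the set in `dualNorm` bounded, so its `sSup` is not the junk value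
  obtain ⟨m, hm, hmp⟩ := p.exists_pos_mul_norm_le hp
  have hbdd : BddAbove ((fun x => ⟪x, z⟫) '' {x | p x ≤ 1}) := by
    refine ⟨m⁻¹ * ‖z‖, ?_⟩
    rintro _ ⟨x, hx, rfl⟩
    have hx' : ‖x‖ ≤ m⁻¹ := by
      rw [← one_div, le_div_iff₀' hm]; exact (hmp x).trans hx
    calc ⟪x, z⟫ ≤ ‖x‖ * ‖z‖ := real_inner_le_norm x z
      _ ≤ m⁻¹ * ‖z‖ := by gcongr
  rcases (apply_nonneg p w).eq_or_lt with hw | hw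
  · simp [hp w hw.symm]
  have hmem : (p w)⁻¹ • w ∈ {x | p x ≤ 1} := by
    simp [map_smul_eq_mul, abs_of_pos hw, inv_mul_cancel₀ hw.ne']
  have : ⟪(p w)⁻¹ • w, z⟫ ≤ dualNorm p z := le_csSup hbdd ⟨_, hmem, rfl⟩
  rw [real_inner_smul_left, real_inner_comm, inv_mul_le_iff₀ hw] at this
  exact this

end DualNorm

theorem le_add_inner_add_sq_of_dualNorm_gradient_le {d : ℕ}
    {p : Seminorm ℝ (EuclideanSpace ℝ (Fin d))} (hp : ∀ u, p u = 0 → u = 0)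
    {f : EuclideanSpace ℝ (Fin d) → ℝ} (hf : Differentiable ℝ f) {L : ℝ}
    (hsmooth : ∀ u v, dualNorm p (gradient f u - gradient f v) ≤ L * p (u - v))
    (u v : EuclideanSpace ℝ (Fin d)) :
    f v ≤ f u + ⟪gradient f u, v - u⟫ + L / 2 * p (v - u) ^ 2 := by
  set h : ℝ → ℝ := fun s =>
    (f ∘ lineMap u v) s - s * ⟪gradient f u, v - u⟫ - L / 2 * p (v - u) ^ 2 * s ^ 2
  have hder : ∀ s, HasDerivAt h (⟪gradient f (lineMap u v s), v - u⟫
      - ⟪gradient f u, v - u⟫ - L * p (v - u) ^ 2 * s) s := fun s => by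
    have := ((hasDerivAt_comp_lineMap (u := u) (v := v) (hf _)).sub ((hasDerivAt_id s).mul_const
      ⟪gradient f u, v - u⟫)).sub ((hasDerivAt_pow 2 s).const_mul (L / 2 * p (v - u) ^ 2))
    exact this.congr_deriv (by push_cast; ring)
  have hanti : AntitoneOn h (Set.Icc 0 1) := by
    refine antitoneOn_of_deriv_nonpos (convex_Icc 0 1)
      (fun s _ => (hder s).continuousAt.continuousWithinAt)
      (fun s _ => (hder s).differentiableAt.differentiableWithinAt) fun s hs => ?_
    rw [interior_Icc] at hs
    have hsub : lineMap u v s - u = s • (v - u) := lineMap_vsub_left u v s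
    have hlip := hsmooth (lineMap u v s) u
    rw [hsub, map_smul_eq_mul, Real.norm_of_nonneg hs.1.le] at hlip
    have := inner_le_mul_dualNorm hp (gradient f (lineMap u v s) - gradient f u) (v - u)
    rw [(hder s).deriv]
    rw [inner_sub_left] at this
    nlinarith [apply_nonneg p (v - u)]
  have := hanti (by simp) (by simp) zero_le_one
  simp only [h, Function.comp_apply, lineMap_apply_zero, lineMap_apply_one] at this
  linarith

section Round

variable {d : ℕ} {p : Seminorm ℝ (EuclideanSpace ℝ (Fin d))} {f : EuclideanSpace ℝ (Fin d) → ℝ}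
  {L A α : ℝ} {xprev xnext xb xtil xnew z : EuclideanSpace ℝ (Fin d)}

theorem add_mul_le_of_weighted_averages (hp : ∀ u, p u = 0 → u = 0)
    (hconv : ConvexOn ℝ Set.univ f) (hf : Differentiable ℝ f)
    (hsmooth : ∀ u v, dualNorm p (gradient f u - gradient f v) ≤ L * p (u - v))
    (hA : 0 ≤ A) (hα : 0 ≤ α) (hAα : 0 < A + α)
    (htil : (A + α) • xtil = α • xprev + A • xb) (hnew : (A + α) • xnew = α • xnext + A • xb) :
    (A + α) * f xnew ≤ A * f xb + α * f z + α * ⟪gradient f xtil, xnext - z⟫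
      + L * α ^ 2 / (2 * (A + α)) * p (xnext - xprev) ^ 2 := by
  set y := gradient f xtil
  have hstep : xnew - xtil = (α / (A + α)) • (xnext - xprev) := by
    apply smul_right_injective _ hAα.ne'
    simp only [smul_sub, htil, hnew, smul_smul, mul_div_cancel₀ _ hAα.ne']
    module
  have hdescent : (A + α) * (f xnew - f xtil)
      ≤ α * ⟪y, xnext - xprev⟫ + L * α ^ 2 / (2 * (A + α)) * p (xnext - xprev) ^ 2 := by
    have := le_add_inner_add_sq_of_dualNorm_gradient_le hp hf hsmooth xtil xnew
    rw [hstep, real_inner_smul_right, map_smul_eq_mul, Real.norm_of_nonneg (by positivity)]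
      at this
    calc (A + α) * (f xnew - f xtil)
        ≤ (A + α) * (α / (A + α) * ⟪y, xnext - xprev⟫
          + L / 2 * (α / (A + α) * p (xnext - xprev)) ^ 2) := by gcongr; linarith
      _ = _ := by field_simp
  have hxb := mul_le_mul_of_nonneg_left (hconv.add_inner_gradient_le (hf xtil) xb) hA
  have hz := mul_le_mul_of_nonneg_left (hconv.add_inner_gradient_le (hf xtil) z) hα
  have hinner : (A + α) * ⟪y, xtil⟫ = α * ⟪y, xprev⟫ + A * ⟪y, xb⟫ := by
    simpa only [inner_add_right, real_inner_smul_right] using congrArg (⟪y, ·⟫) htil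
  simp only [inner_sub_right] at hdescent hxb hz ⊢
  linarith

theorem fenchelGame_round_le (hp : ∀ u, p u = 0 → u = 0)
    (hconv : ConvexOn ℝ Set.univ f) (hf : Differentiable ℝ f) (hL : 0 ≤ L)
    (hsmooth : ∀ u v, dualNorm p (gradient f u - gradient f v) ≤ L * p (u - v))
    {φ : EuclideanSpace ℝ (Fin d) → ℝ} (hφ : Differentiable ℝ φ)
    (hsc : 1 / 2 * p (xnext - xprev) ^ 2 ≤ bregmanDiv φ xprev xnext)
    {X : Set (EuclideanSpace ℝ (Fin d))} (hX : Convex ℝ X) (hz : z ∈ X) (hxnext : xnext ∈ X)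
    {γ : ℝ} (hγ : 0 < γ) (hγL : 2 * L ≤ γ⁻¹)
    (hA : 0 ≤ A) (hα : 0 ≤ α) (hAα : 0 < A + α) (hαA : α ^ 2 ≤ 2 * (A + α))
    (htil : (A + α) • xtil = α • xprev + A • xb) (hnew : (A + α) • xnew = α • xnext + A • xb)
    (hmd : IsMinOn (fun w => γ * α * ⟪w, gradient f xtil⟫ + bregmanDiv φ xprev w) X xnext) :
    (A + α) * (f xnew - f z)
      ≤ A * (f xb - f z) + γ⁻¹ * (bregmanDiv φ xprev z - bregmanDiv φ xnext z) := by
  have hprimal := add_mul_le_of_weighted_averages (z := z) hp hconv hf hsmooth hA hα hAα htil hnew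
  have hdual : α * ⟪gradient f xtil, xnext - z⟫ ≤ γ⁻¹ * (bregmanDiv φ xprev z
      - bregmanDiv φ xnext z - bregmanDiv φ xprev xnext) := by
    rw [le_inv_mul_iff₀ hγ, ← mul_assoc]
    exact hmd.inner_le_bregmanDiv hX hxnext hz (hφ xnext)
  have hquad : L * α ^ 2 / (2 * (A + α)) * p (xnext - xprev) ^ 2
      ≤ γ⁻¹ * bregmanDiv φ xprev xnext := by
    have hratio : α ^ 2 / (2 * (A + α)) ≤ 1 := (div_le_one (by positivity)).2 hαA
    calc L * α ^ 2 / (2 * (A + α)) * p (xnext - xprev) ^ 2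
        = α ^ 2 / (2 * (A + α)) * (2 * L * (1 / 2 * p (xnext - xprev) ^ 2)) := by ring
      _ ≤ 1 * (γ⁻¹ * bregmanDiv φ xprev xnext) := by gcongr
      _ = γ⁻¹ * bregmanDiv φ xprev xnext := one_mul _
  linarith

end Round

theorem le_mul_of_le_add_mul_sub {E c a : ℕ → ℝ} {D : ℝ} {T : ℕ} (hT : 1 ≤ T) (hE₀ : E 0 ≤ 0)
    (hstep : ∀ n < T, E (n + 1) ≤ E n + c (n + 1) * (a n - a (n + 1)))
    (hc₁ : 0 ≤ c 1) (hc : ∀ s ∈ Icc 1 T, ∀ t ∈ Icc 1 T, s ≤ t → c s ≤ c t)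
    (ha : ∀ n ≤ T, a n ≤ D) (haT : 0 ≤ a T) : E T ≤ c T * D := by
  have hcT : c 1 ≤ c T := hc 1 (by simp [hT]) T (by simp [hT]) hT
  suffices ∀ n, 1 ≤ n → n ≤ T → E n + c n * a n ≤ c n * D by
    nlinarith [this T hT le_rfl, mul_nonneg (hc₁.trans hcT) haT]
  intro n hn
  induction n, hn using Nat.le_induction with
  | base =>
    intro h1T
    nlinarith [hstep 0 h1T, mul_le_mul_of_nonneg_left (ha 0 (Nat.zero_le T)) hc₁]
  | succ k hk ih =>
    intro hkT
    have hck : c k ≤ c (k + 1) :=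
      hc k (by simp; omega) (k + 1) (by simp; omega) k.le_succ
    nlinarith [hstep k hkT, ih (by omega), mul_le_mul_of_nonneg_right hck
      (sub_nonneg.2 (ha k (by omega)))]

theorem sum_Icc_one_natCast (n : ℕ) : ∑ s ∈ Icc 1 n, (s : ℝ) = n * (n + 1) / 2 := by
  induction n with
  | zero => simp
  | succ k ih =>
    rw [Finset.sum_Icc_succ_top (by omega), ih]
    push_cast
    ring

-- At `n = 0` this is `0⁻¹ • 0 = 0`; it only ever appears multiplied by the weight sum `0`.
noncomputable def linAvg {E : Type*} [AddCommGroup E] [Module ℝ E] (x : ℕ → E) (n : ℕ) : E :=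
  (∑ s ∈ Icc 1 n, (s : ℝ))⁻¹ • ∑ s ∈ Icc 1 n, (s : ℝ) • x s

theorem sum_smul_linAvg {E : Type*} [AddCommGroup E] [Module ℝ E] (x : ℕ → E) (n : ℕ) :
    (∑ s ∈ Icc 1 n, (s : ℝ)) • linAvg x n = ∑ s ∈ Icc 1 n, (s : ℝ) • x s := by
  rcases n with _ | n
  · simp
  · exact smul_inv_smul₀ (by rw [sum_Icc_one_natCast]; positivity) _

theorem fenchelGame_linAvg_round_le {d : ℕ} {p : Seminorm ℝ (EuclideanSpace ℝ (Fin d))}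
    (hp : ∀ u, p u = 0 → u = 0) {f : EuclideanSpace ℝ (Fin d) → ℝ}
    (hconv : ConvexOn ℝ Set.univ f) (hf : Differentiable ℝ f) {L : ℝ} (hL : 0 ≤ L)
    (hsmooth : ∀ u v, dualNorm p (gradient f u - gradient f v) ≤ L * p (u - v))
    {φ : EuclideanSpace ℝ (Fin d) → ℝ} (hφ : Differentiable ℝ φ)
    (hsc : ∀ c x, 1 / 2 * p (x - c) ^ 2 ≤ bregmanDiv φ c x)
    {X : Set (EuclideanSpace ℝ (Fin d))} (hX : Convex ℝ X) {z : EuclideanSpace ℝ (Fin d)}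
    (hz : z ∈ X) {x : ℕ → EuclideanSpace ℝ (Fin d)} {xtil : EuclideanSpace ℝ (Fin d)} {n : ℕ}
    (hxn : x (n + 1) ∈ X) {γ : ℝ} (hγ : 0 < γ) (hγL : 2 * L ≤ γ⁻¹)
    (htil : xtil = (∑ s ∈ Icc 1 (n + 1), (s : ℝ))⁻¹
      • (((n + 1 : ℕ) : ℝ) • x n + ∑ s ∈ Icc 1 n, (s : ℝ) • x s))
    (hmd : IsMinOn (fun w => γ * (n + 1 : ℕ) * ⟪w, gradient f xtil⟫ + bregmanDiv φ (x n) w)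
      X (x (n + 1))) :
    (∑ s ∈ Icc 1 (n + 1), (s : ℝ)) * (f (linAvg x (n + 1)) - f z)
      ≤ (∑ s ∈ Icc 1 n, (s : ℝ)) * (f (linAvg x n) - f z)
        + γ⁻¹ * (bregmanDiv φ (x n) z - bregmanDiv φ (x (n + 1)) z) := by
  have hsucc : ∑ s ∈ Icc 1 (n + 1), (s : ℝ) = ∑ s ∈ Icc 1 n, (s : ℝ) + (n + 1 : ℕ) :=
    Finset.sum_Icc_succ_top (Nat.le_add_left 1 n) _
  have hpos : 0 < ∑ s ∈ Icc 1 (n + 1), (s : ℝ) := by rw [sum_Icc_one_natCast]; positivity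
  rw [hsucc] at hpos ⊢
  refine fenchelGame_round_le hp hconv hf hL hsmooth hφ (hsc _ _) hX hz hxn hγ hγL
    (by rw [sum_Icc_one_natCast]; positivity) (by positivity) hpos ?_ ?_ ?_ hmd
  · rw [sum_Icc_one_natCast]; push_cast; nlinarith
  · rw [htil, ← hsucc, smul_inv_smul₀ (hsucc ▸ hpos.ne'), sum_smul_linAvg]
  · rw [← hsucc, sum_smul_linAvg, sum_smul_linAvg, add_comm (_ • x (n + 1))]
    exact Finset.sum_Icc_succ_top (Nat.le_add_left 1 n) _

theorem le_two_mul_div_sq_of_mul_le {g B : ℝ} {T : ℕ} (hT : 1 ≤ T) (hB : 0 ≤ B)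
    (h : T * (T + 1) / 2 * g ≤ B) : g ≤ 2 * B / (T : ℝ) ^ 2 := by
  have hT' : (1 : ℝ) ≤ T := by exact_mod_cast hT
  rw [le_div_iff₀ (by positivity)]
  rcases le_or_gt g 0 with hg | hg
  · nlinarith [mul_nonpos_of_nonpos_of_nonneg hg (sq_nonneg (T : ℝ))]
  · nlinarith [mul_le_mul_of_nonneg_left (by nlinarith : (T : ℝ) ^ 2 ≤ T * (T + 1)) hg.le]

theorem fenchel_game_accelerated_rate_general {d : ℕ}
    (f : EuclideanSpace ℝ (Fin d) → ℝ)
    (X : Set (EuclideanSpace ℝ (Fin d)))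
    (hconv : ConvexOn ℝ Set.univ f)
    (hXconv : Convex ℝ X)
    (N : EuclideanSpace ℝ (Fin d) → ℝ)
    -- N is a norm
    (hN_add : ∀ u v, N (u + v) ≤ N u + N v)
    (hN_smul : ∀ (a : ℝ) (u : EuclideanSpace ℝ (Fin d)), N (a • u) = |a| * N u)
    (hN_zero : ∀ u, N u = 0 → u = 0)
    -- f is L-smooth with respect to N
    (L : ℝ) (hL : 0 < L)
    (hdiff : Differentiable ℝ f)
    (hsmooth : ∀ u v, dualNorm N (gradient f u - gradient f v) ≤ L * N (u - v))
    (xstar : EuclideanSpace ℝ (Fin d)) (hxstar : xstar ∈ X)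
    (T : ℕ) (hT : 1 ≤ T)
    -- weights α_t = t
    (α : ℕ → ℝ) (hαdef : ∀ t, α t = (t : ℝ))
    (A : ℕ → ℝ) (hA : ∀ t, A t = ∑ s ∈ Icc 1 t, α s)
    -- learning rates: non-increasing, 1/(CL) ≤ γ_t ≤ 1/(4L) with C > 4
    (C : ℝ) (hC : 4 < C)
    (γ : ℕ → ℝ)
    (hγ : ∀ t ∈ Icc 1 T, 1 / (C * L) ≤ γ t ∧ γ t ≤ 1 / (4 * L))
    (hγmono : ∀ s ∈ Icc 1 T, ∀ t ∈ Icc 1 T, s ≤ t → γ t ≤ γ s)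
    -- φ is differentiable, 1-strongly convex w.r.t. N, with Bregman divergence V
    (φ : EuclideanSpace ℝ (Fin d) → ℝ) (hφ : Differentiable ℝ φ)
    (V : EuclideanSpace ℝ (Fin d) → EuclideanSpace ℝ (Fin d) → ℝ)
    (hV : ∀ c x, V c x = φ x - ⟪gradient φ c, x - c⟫ - φ c)
    (hφsc : ∀ c x, (1 / 2) * (N (x - c)) ^ 2 ≤ V c x)
    -- the game dynamics
    (x : ℕ → EuclideanSpace ℝ (Fin d))
    (xtil : ℕ → EuclideanSpace ℝ (Fin d))
    (hxtil : ∀ t, 1 ≤ t →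
      xtil t = (A t)⁻¹ • (α t • x (t - 1) + ∑ s ∈ Icc 1 (t - 1), α s • x s))
    (y : ℕ → EuclideanSpace ℝ (Fin d))
    (hy : ∀ t, 1 ≤ t → y t = gradient f (xtil t))
    (hx : ∀ t ∈ Icc 1 T, x t ∈ X ∧ ∀ w ∈ X,
      γ t * (α t * ⟪x t, y t⟫) + V (x (t - 1)) (x t)
        ≤ γ t * (α t * ⟪w, y t⟫) + V (x (t - 1)) w)
    (D : ℝ) (hD : ∀ t ≤ T, V (x t) xstar ≤ D)
    (xbar : EuclideanSpace ℝ (Fin d))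
    (hxbar : xbar = (A T)⁻¹ • ∑ t ∈ Icc 1 T, α t • x t) :
    f xbar - f xstar ≤ 2 * C * L * D / (T : ℝ) ^ 2 := by
  simp only [hαdef] at hA hxtil hx hxbar
  obtain rfl : A = fun t : ℕ => ∑ s ∈ Icc 1 t, (s : ℝ) := funext hA
  obtain rfl : V = bregmanDiv φ := funext fun c => funext (hV c)
  obtain rfl : xbar = linAvg x T := hxbar
  let p : Seminorm ℝ (EuclideanSpace ℝ (Fin d)) :=
    Seminorm.of N hN_add fun a u => by rw [hN_smul, Real.norm_eq_abs]
  have hγinv (t) (ht : t ∈ Icc 1 T) : 0 < γ t ∧ 4 * L ≤ (γ t)⁻¹ ∧ (γ t)⁻¹ ≤ C * L := by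
    have hγt : 0 < γ t := (hγ t ht).1.trans_lt' (by positivity)
    simpa [hγt] using
      And.intro (inv_anti₀ hγt (hγ t ht).2) (inv_anti₀ (by positivity) (hγ t ht).1)
  have hVT : 0 ≤ bregmanDiv φ (x T) xstar := (hφsc _ _).trans' (by positivity)
  have hDnn : 0 ≤ D := hVT.trans (hD T le_rfl)
  suffices hgap : (∑ s ∈ Icc 1 T, (s : ℝ)) * (f (linAvg x T) - f xstar) ≤ (γ T)⁻¹ * D by
    rw [sum_Icc_one_natCast] at hgap
    simpa only [mul_assoc] using le_two_mul_div_sq_of_mul_le hT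
      (mul_nonneg (mul_pos (by linarith) hL).le hDnn)
      (hgap.trans (mul_le_mul_of_nonneg_right (hγinv T (by simp [hT])).2.2 hDnn))
  refine le_mul_of_le_add_mul_sub (c := fun t => (γ t)⁻¹)
    (E := fun n => (∑ s ∈ Icc 1 n, (s : ℝ)) * (f (linAvg x n) - f xstar)) hT (by simp)
    (fun n hn => ?_) (inv_pos.2 (hγinv 1 (by simp [hT])).1).le
    (fun s hs t ht hst => inv_anti₀ (hγinv t ht).1 (hγmono s hs t ht hst)) hD hVT
  have ht : n + 1 ∈ Icc 1 T := Finset.mem_Icc.2 ⟨by omega, hn⟩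
  refine fenchelGame_linAvg_round_le (p := p) hN_zero hconv hdiff hL.le hsmooth hφ hφsc hXconv
    hxstar (hx _ ht).1 (hγinv _ ht).1 (by linarith [(hγinv _ ht).2.1]) (hxtil _ (by omega))
    fun w hw => ?_
  simpa only [Set.mem_ofPred_eq, mul_assoc, hy _ (by omega : 1 ≤ n + 1), Nat.add_sub_cancel]
    using (hx _ ht).2 w hw

/-- Corollary 1: with weights `α_t = t` and non-increasing learning rates
`1/(CL) ≤ γ_t ≤ 1/(4L)` (`C > 4`), the Fenchel-game dynamics (Optimistic-FTL vs. Mirror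
Descent) give `f(x̄_T) - min_{x ∈ 𝒳} f(x) ≤ 2CLD/T²`. -/
theorem fenchel_game_accelerated_rate {d : ℕ}
    (f : EuclideanSpace ℝ (Fin d) → ℝ)
    (X : Set (EuclideanSpace ℝ (Fin d)))
    (hconv : ConvexOn ℝ Set.univ f)
    (hlsc : LowerSemicontinuous f)
    (hXcomp : IsCompact X) (hXconv : Convex ℝ X)
    (N : EuclideanSpace ℝ (Fin d) → ℝ)
    -- N is a norm
    (hN_add : ∀ u v, N (u + v) ≤ N u + N v)
    (hN_smul : ∀ (a : ℝ) (u : EuclideanSpace ℝ (Fin d)), N (a • u) = |a| * N u)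
    (hN_zero : ∀ u, N u = 0 → u = 0)
    -- f is L-smooth with respect to N
    (L : ℝ) (hL : 0 < L)
    (hdiff : Differentiable ℝ f)
    (hsmooth : ∀ u v, dualNorm N (gradient f u - gradient f v) ≤ L * N (u - v))
    -- x* minimizes f over X
    (xstar : EuclideanSpace ℝ (Fin d)) (hxstar : xstar ∈ X)
    (hmin : ∀ w ∈ X, f xstar ≤ f w)
    (T : ℕ) (hT : 1 ≤ T)
    -- weights α_t = t
    (α : ℕ → ℝ) (hαdef : ∀ t, α t = (t : ℝ))
    (A : ℕ → ℝ) (hA : ∀ t, A t = ∑ s ∈ Icc 1 t, α s)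
    -- learning rates: non-increasing, 1/(CL) ≤ γ_t ≤ 1/(4L) with C > 4
    (C : ℝ) (hC : 4 < C)
    (γ : ℕ → ℝ)
    (hγ : ∀ t ∈ Icc 1 T, 1 / (C * L) ≤ γ t ∧ γ t ≤ 1 / (4 * L))
    (hγmono : ∀ s ∈ Icc 1 T, ∀ t ∈ Icc 1 T, s ≤ t → γ t ≤ γ s)
    -- φ is differentiable, 1-strongly convex w.r.t. N, with Bregman divergence V
    (φ : EuclideanSpace ℝ (Fin d) → ℝ) (hφ : Differentiable ℝ φ)
    (V : EuclideanSpace ℝ (Fin d) → EuclideanSpace ℝ (Fin d) → ℝ)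
    (hV : ∀ c x, V c x = φ x - ⟪gradient φ c, x - c⟫ - φ c)
    (hφsc : ∀ c x, (1 / 2) * (N (x - c)) ^ 2 ≤ V c x)
    -- the game dynamics
    (x : ℕ → EuclideanSpace ℝ (Fin d)) (hx0 : x 0 ∈ X)
    (xtil : ℕ → EuclideanSpace ℝ (Fin d))
    (hxtil : ∀ t, 1 ≤ t →
      xtil t = (A t)⁻¹ • (α t • x (t - 1) + ∑ s ∈ Icc 1 (t - 1), α s • x s))
    (y : ℕ → EuclideanSpace ℝ (Fin d))
    (hy : ∀ t, 1 ≤ t → y t = gradient f (xtil t))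
    (hx : ∀ t ∈ Icc 1 T, x t ∈ X ∧ ∀ w ∈ X,
      γ t * (α t * ⟪x t, y t⟫) + V (x (t - 1)) (x t)
        ≤ γ t * (α t * ⟪w, y t⟫) + V (x (t - 1)) w)
    (D : ℝ) (hD : ∀ t ≤ T, V (x t) xstar ≤ D)
    (xbar : EuclideanSpace ℝ (Fin d))
    (hxbar : xbar = (A T)⁻¹ • ∑ t ∈ Icc 1 T, α t • x t) :
    f xbar - f xstar ≤ 2 * C * L * D / (T : ℝ) ^ 2 :=
  fenchel_game_accelerated_rate_general f X hconv hXconv N hN_add hN_smul hN_zero L hL hdiff hsmooth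
    xstar hxstar T hT α hαdef A hA C hC γ hγ hγmono φ hφ V hV hφsc x xtil hxtil y hy hx D hD xbar
    hxbar
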